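/- Let σ > 0, θ(r) = (σ²/2 + √(σ⁴/4 + 2σ² r))/σ², and let F, G be probability distributions on (0,∞) with discount functions h_F, h_G. If h_F(t) ≥ h_G(t) for all t ≥ 0, then ∫₀^∞ θ(r) dF(r) ≤ ∫₀^∞ θ(r) dG(r), assuming both integrals are finite. -/

import Mathlib

/-!
`r ↦ √(a + c r) - √a` is a Bernstein function. The substitution `t ↦ y t` gives
`∫₀^∞ t^{-3/2} (1 - e^{-y t}) dt = C √y` with `C = ∫₀^∞ t^{-3/2} (1 - e^{-t}) dt > 0`, and subtracting
this identity at `y = a` from the one at `y = a + x` gives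
`C (√(a + x) - √a) = ∫₀^∞ t^{-3/2} e^{-a t} (1 - e^{-x t}) dt`.
Since `θ(r) = 1 + √(1/4 + 2r/σ²) - √(1/4)`, integrating in `r` against `F` and swapping the integrals
(Tonelli) yields `C ∫ (θ - 1) dF = ∫₀^∞ t^{-3/2} e^{-t/4} (1 - h_F(2t/σ²)) dt`, which is antitone in `h_F`.
-/

open Real MeasureTheory Set

/-- The positive root `θ(r)` of `(1/2)σ²θ² - (1/2)σ²θ - r = 0`. -/
noncomputable def θfun (σ r : ℝ) : ℝ :=
  (σ^2 / 2 + Real.sqrt (σ^4 / 4 + 2 * σ^2 * r)) / σ^2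

/-- The discount function induced by the weighting distribution `F`. -/
noncomputable def discount (F : Measure ℝ) (t : ℝ) : ℝ := ∫ r, Real.exp (-r * t) ∂F

noncomputable def sqrtLevyKernel (t : ℝ) : ℝ := t ^ (-3/2 : ℝ) * (1 - exp (-t))

/-- Equal to `2√π`; only its positivity matters. -/
noncomputable def sqrtLevyConst : ℝ := ∫ t in Ioi 0, sqrtLevyKernel t

lemma measurable_sqrtLevyKernel : Measurable sqrtLevyKernel := by
  unfold sqrtLevyKernel; fun_prop

lemma sqrtLevyKernel_pos {t : ℝ} (ht : 0 < t) : 0 < sqrtLevyKernel t :=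
  mul_pos (rpow_pos_of_pos ht _) (sub_pos.2 (exp_lt_one_iff.2 (neg_neg_of_pos ht)))

lemma sqrtLevyKernel_le_rpow_neg_one_half {t : ℝ} (ht : 0 < t) :
    sqrtLevyKernel t ≤ t ^ (-1/2 : ℝ) :=
  calc sqrtLevyKernel t ≤ t ^ (-3/2 : ℝ) * t :=
        mul_le_mul_of_nonneg_left (by linarith [add_one_le_exp (-t)]) (rpow_nonneg ht.le _)
    _ = t ^ (-1/2 : ℝ) := by rw [← rpow_add_one ht.ne']; norm_num

lemma sqrtLevyKernel_le_rpow_neg_three_halves {t : ℝ} (ht : 0 < t) :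
    sqrtLevyKernel t ≤ t ^ (-3/2 : ℝ) :=
  mul_le_of_le_one_right (rpow_nonneg ht.le _) (by linarith [exp_pos (-t)])

lemma integrableOn_sqrtLevyKernel : IntegrableOn sqrtLevyKernel (Ioi 0) := by
  have near_zero : IntegrableOn sqrtLevyKernel (Ioc 0 1) := by
    have hg : IntegrableOn (fun t : ℝ => t ^ (-1/2 : ℝ)) (Ioc 0 1) :=
      ((intervalIntegral.integrableOn_Ioo_rpow_iff two_pos).2 (by norm_num)).mono_set
        fun t ht => ⟨ht.1, ht.2.trans_lt one_lt_two⟩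
    refine hg.mono' measurable_sqrtLevyKernel.aestronglyMeasurable <|
      (ae_restrict_iff' measurableSet_Ioc).2 (ae_of_all _ fun t ht => ?_)
    rw [norm_of_nonneg (sqrtLevyKernel_pos ht.1).le]
    exact sqrtLevyKernel_le_rpow_neg_one_half ht.1
  have near_top : IntegrableOn sqrtLevyKernel (Ioi 1) := by
    have hg : IntegrableOn (fun t : ℝ => t ^ (-3/2 : ℝ)) (Ioi 1) :=
      (integrableOn_Ioi_rpow_iff one_pos).2 (by norm_num)
    refine hg.mono' measurable_sqrtLevyKernel.aestronglyMeasurable <|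
      (ae_restrict_iff' measurableSet_Ioi).2 (ae_of_all _ fun t ht => ?_)
    have ht0 : (0 : ℝ) < t := one_pos.trans ht
    rw [norm_of_nonneg (sqrtLevyKernel_pos ht0).le]
    exact sqrtLevyKernel_le_rpow_neg_three_halves ht0
  simpa only [Ioc_union_Ioi_eq_Ioi zero_le_one] using near_zero.union near_top

lemma sqrtLevyConst_pos : 0 < sqrtLevyConst := by
  rw [sqrtLevyConst, setIntegral_pos_iff_support_of_nonneg_ae
    ((ae_restrict_iff' measurableSet_Ioi).2 (ae_of_all _ fun t ht => (sqrtLevyKernel_pos ht).le))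
    integrableOn_sqrtLevyKernel]
  calc (0 : ENNReal) < volume (Ioi (0 : ℝ)) := by simp
    _ ≤ volume (Function.support sqrtLevyKernel ∩ Ioi 0) :=
      measure_mono fun t ht => ⟨(sqrtLevyKernel_pos ht).ne', ht⟩

lemma rpow_mul_one_sub_exp_eq {y t : ℝ} (hy : 0 < y) (ht : 0 < t) :
    t ^ (-3/2 : ℝ) * (1 - exp (-(y * t))) = y ^ (3/2 : ℝ) * sqrtLevyKernel (y * t) := by
  rw [sqrtLevyKernel, mul_rpow hy.le ht.le, ← mul_assoc, ← mul_assoc, ← rpow_add hy]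
  norm_num

lemma integrableOn_rpow_mul_one_sub_exp {y : ℝ} (hy : 0 < y) :
    IntegrableOn (fun t => t ^ (-3/2 : ℝ) * (1 - exp (-(y * t)))) (Ioi 0) := by
  have h := (integrableOn_Ioi_comp_mul_left_iff sqrtLevyKernel 0 hy).2
  rw [mul_zero] at h
  exact IntegrableOn.congr_fun ((h integrableOn_sqrtLevyKernel).const_mul (y ^ (3/2 : ℝ)))
    (fun t ht => (rpow_mul_one_sub_exp_eq hy ht).symm) measurableSet_Ioi

lemma integral_rpow_mul_one_sub_exp {y : ℝ} (hy : 0 < y) :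
    ∫ t in Ioi 0, t ^ (-3/2 : ℝ) * (1 - exp (-(y * t))) = √y * sqrtLevyConst := by
  have h := integral_comp_mul_left_Ioi sqrtLevyKernel 0 hy
  rw [mul_zero] at h
  rw [setIntegral_congr_fun measurableSet_Ioi fun t ht => rpow_mul_one_sub_exp_eq hy ht,
    integral_const_mul, h, smul_eq_mul, sqrtLevyConst, ← mul_assoc, ← rpow_neg_one,
    ← rpow_add hy, sqrt_eq_rpow]
  norm_num

lemma lintegral_rpow_mul_one_sub_exp {y : ℝ} (hy : 0 < y) :
    ∫⁻ t in Ioi 0, ENNReal.ofReal (t ^ (-3/2 : ℝ) * (1 - exp (-(y * t))))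
      = ENNReal.ofReal (√y * sqrtLevyConst) := by
  rw [← integral_rpow_mul_one_sub_exp hy,
    ofReal_integral_eq_lintegral_ofReal (integrableOn_rpow_mul_one_sub_exp hy)]
  refine (ae_restrict_iff' measurableSet_Ioi).2 (ae_of_all _ fun t (ht : 0 < t) => ?_)
  exact mul_nonneg (rpow_nonneg ht.le _)
    (sub_nonneg.2 (exp_le_one_iff.2 (neg_nonpos.2 (mul_pos hy ht).le)))

lemma lintegral_rpow_mul_exp_mul_one_sub_exp {a x : ℝ} (ha : 0 < a) (hx : 0 ≤ x) :
    ∫⁻ t in Ioi 0, ENNReal.ofReal (t ^ (-3/2 : ℝ) * exp (-(a * t)) * (1 - exp (-(x * t))))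
      = ENNReal.ofReal ((√(a + x) - √a) * sqrtLevyConst) := by
  have hsqrt : √a ≤ √(a + x) := sqrt_le_sqrt (by linarith)
  have hsplit : ∫⁻ t in Ioi 0, ENNReal.ofReal (t ^ (-3/2 : ℝ) * (1 - exp (-((a + x) * t))))
      = (∫⁻ t in Ioi 0, ENNReal.ofReal (t ^ (-3/2 : ℝ) * (1 - exp (-(a * t)))))
        + ∫⁻ t in Ioi 0, ENNReal.ofReal
            (t ^ (-3/2 : ℝ) * exp (-(a * t)) * (1 - exp (-(x * t)))) := by
    rw [← lintegral_add_left (by fun_prop)]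
    refine setLIntegral_congr_fun measurableSet_Ioi fun t (ht : 0 < t) => ?_
    have hat : exp (-(a * t)) ≤ 1 := exp_le_one_iff.2 (by nlinarith)
    have hxt : exp (-(x * t)) ≤ 1 := exp_le_one_iff.2 (by nlinarith)
    rw [← ENNReal.ofReal_add (mul_nonneg (rpow_nonneg ht.le _) (sub_nonneg.2 hat))
      (mul_nonneg (mul_nonneg (rpow_nonneg ht.le _) (exp_pos _).le) (sub_nonneg.2 hxt)),
      add_mul, neg_add, exp_add]
    ring_nf
  rw [lintegral_rpow_mul_one_sub_exp (by linarith), lintegral_rpow_mul_one_sub_exp ha,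
    ← sub_add_cancel (√(a + x)) (√a), add_mul,
    ENNReal.ofReal_add (mul_nonneg (sub_nonneg.2 hsqrt) sqrtLevyConst_pos.le)
      (mul_nonneg (sqrt_nonneg a) sqrtLevyConst_pos.le), add_comm]
    at hsplit
  exact ((ENNReal.add_right_inj ENNReal.ofReal_ne_top).1 hsplit).symm

lemma lintegral_ofReal_one_sub_exp_eq (μ : Measure ℝ) [IsProbabilityMeasure μ]
    (hμ : ∀ᵐ r ∂μ, 0 ≤ r) {s : ℝ} (hs : 0 ≤ s) :
    ∫⁻ r, ENNReal.ofReal (1 - exp (-r * s)) ∂μ = 1 - ENNReal.ofReal (discount μ s) := by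
  have hle : ∀ᵐ r ∂μ, exp (-r * s) ≤ 1 := by
    filter_upwards [hμ] with r hr
    exact exp_le_one_iff.2 (by nlinarith)
  have hint : Integrable (fun r => exp (-r * s)) μ :=
    .of_bound (by fun_prop) 1 <| by
      filter_upwards [hle] with r hr
      rwa [norm_of_nonneg (exp_pos _).le]
  have hsub : Integrable (fun r => 1 - exp (-r * s)) μ := (integrable_const 1).sub hint
  rw [← ofReal_integral_eq_lintegral_ofReal hsub
      (by filter_upwards [hle] with r hr; simpa using hr),
    integral_sub (integrable_const 1) hint, integral_const, probReal_univ, one_smul,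
    ENNReal.ofReal_sub _ (integral_nonneg fun _ => (exp_pos _).le), ENNReal.ofReal_one, discount]

lemma lintegral_ofReal_sqrt_add_mul_sub_sqrt_mul_eq (μ : Measure ℝ) [IsProbabilityMeasure μ]
    (hμ : ∀ᵐ r ∂μ, 0 ≤ r) {a c : ℝ} (ha : 0 < a) (hc : 0 ≤ c) :
    (∫⁻ r, ENNReal.ofReal (√(a + c * r) - √a) ∂μ) * ENNReal.ofReal sqrtLevyConst
      = ∫⁻ t in Ioi 0, ENNReal.ofReal (t ^ (-3/2 : ℝ) * exp (-(a * t)))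
          * (1 - ENNReal.ofReal (discount μ (c * t))) := by
  rw [← lintegral_mul_const _ (by fun_prop)]
  calc ∫⁻ r, ENNReal.ofReal (√(a + c * r) - √a) * ENNReal.ofReal sqrtLevyConst ∂μ
      = ∫⁻ r, (∫⁻ t in Ioi 0, ENNReal.ofReal
          (t ^ (-3/2 : ℝ) * exp (-(a * t)) * (1 - exp (-(c * r * t))))) ∂μ := by
        apply lintegral_congr_ae
        filter_upwards [hμ] with r hr
        rw [lintegral_rpow_mul_exp_mul_one_sub_exp ha (mul_nonneg hc hr),
          ENNReal.ofReal_mul (sub_nonneg.2 (sqrt_le_sqrt (by nlinarith)))]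
    _ = ∫⁻ t in Ioi 0, ∫⁻ r, ENNReal.ofReal
          (t ^ (-3/2 : ℝ) * exp (-(a * t)) * (1 - exp (-(c * r * t)))) ∂μ :=
        lintegral_lintegral_swap (by unfold Function.uncurry; fun_prop)
    _ = _ := by
        refine setLIntegral_congr_fun measurableSet_Ioi fun t (ht : 0 < t) => ?_
        simp_rw [ENNReal.ofReal_mul (mul_nonneg (rpow_nonneg ht.le _) (exp_pos _).le),
          show ∀ r, c * r * t = r * (c * t) by intro r; ring, ← neg_mul]
        rw [lintegral_const_mul _ (by fun_prop),
          lintegral_ofReal_one_sub_exp_eq μ hμ (mul_nonneg hc ht.le)]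

lemma lintegral_ofReal_sqrt_add_mul_sub_sqrt_le (μ ν : Measure ℝ)
    [IsProbabilityMeasure μ] [IsProbabilityMeasure ν]
    (hμ : ∀ᵐ r ∂μ, 0 ≤ r) (hν : ∀ᵐ r ∂ν, 0 ≤ r) {a c : ℝ} (ha : 0 < a) (hc : 0 ≤ c)
    (hdisc : ∀ t, 0 ≤ t → discount ν t ≤ discount μ t) :
    ∫⁻ r, ENNReal.ofReal (√(a + c * r) - √a) ∂μ
      ≤ ∫⁻ r, ENNReal.ofReal (√(a + c * r) - √a) ∂ν := by
  refine (ENNReal.mul_le_mul_iff_left (ENNReal.ofReal_pos.2 sqrtLevyConst_pos).ne'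
    ENNReal.ofReal_ne_top).1 ?_
  rw [lintegral_ofReal_sqrt_add_mul_sub_sqrt_mul_eq μ hμ ha hc,
    lintegral_ofReal_sqrt_add_mul_sub_sqrt_mul_eq ν hν ha hc]
  refine setLIntegral_mono' measurableSet_Ioi fun t (ht : 0 < t) => ?_
  gcongr
  exact hdisc _ (mul_nonneg hc ht.le)

lemma integral_le_integral_of_lintegral_ofReal_le {α : Type*} [MeasurableSpace α]
    {μ ν : Measure α} {f : α → ℝ} (hfμ : 0 ≤ᵐ[μ] f) (hfm : AEStronglyMeasurable f μ)
    (hfν : 0 ≤ᵐ[ν] f) (hf : Integrable f ν)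
    (h : ∫⁻ x, ENNReal.ofReal (f x) ∂μ ≤ ∫⁻ x, ENNReal.ofReal (f x) ∂ν) :
    ∫ x, f x ∂μ ≤ ∫ x, f x ∂ν := by
  rw [integral_eq_lintegral_of_nonneg_ae hfμ hfm, integral_eq_lintegral_of_nonneg_ae hfν hf.1]
  exact ENNReal.toReal_mono ((lintegral_ofReal_ne_top_iff_integrable hf.1 hfν).2 hf) h

lemma measurable_θfun (σ : ℝ) : Measurable (θfun σ) := by
  unfold θfun; fun_prop

lemma θfun_nonneg (σ r : ℝ) : 0 ≤ θfun σ r := by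
  unfold θfun; positivity

lemma θfun_eq {σ : ℝ} (hσ : σ ≠ 0) (r : ℝ) :
    θfun σ r = 1 + (√(1/4 + 2 / σ^2 * r) - √(1/4)) := by
  have hσ2 : 0 < σ^2 := by positivity
  have hquarter : √(1/4 : ℝ) = 1/2 := by
    rw [show (1/4 : ℝ) = (1/2)^2 by norm_num, sqrt_sq (by norm_num)]
  rw [θfun, show σ^4 / 4 + 2 * σ^2 * r = (σ^2)^2 * (1/4 + 2 / σ^2 * r) by field_simp,
    sqrt_mul (sq_nonneg _), sqrt_sq hσ2.le, hquarter]
  field_simp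
  ring

lemma lintegral_ofReal_θfun_eq {σ : ℝ} (hσ : σ ≠ 0) (μ : Measure ℝ) [IsProbabilityMeasure μ]
    (hμ : ∀ᵐ r ∂μ, 0 ≤ r) :
    ∫⁻ r, ENNReal.ofReal (θfun σ r) ∂μ
      = 1 + ∫⁻ r, ENNReal.ofReal (√(1/4 + 2 / σ^2 * r) - √(1/4)) ∂μ := by
  rw [← measure_univ (μ := μ), ← lintegral_one, ← lintegral_add_left measurable_const]
  refine lintegral_congr_ae ?_
  filter_upwards [hμ] with r hr
  rw [θfun_eq hσ, ENNReal.ofReal_add zero_le_one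
    (sub_nonneg.2 (sqrt_le_sqrt (le_add_of_nonneg_right (by positivity)))), ENNReal.ofReal_one]

theorem stmt12_general (σ : ℝ) (hσ : 0 < σ) (F G : Measure ℝ)
    [IsProbabilityMeasure F] [IsProbabilityMeasure G]
    (hFc : F (Ioi (0:ℝ))ᶜ = 0) (hGc : G (Ioi (0:ℝ))ᶜ = 0)
    (hdom : ∀ t : ℝ, 0 ≤ t → discount F t ≥ discount G t)
    (hIntG : Integrable (θfun σ) G) :
    ∫ r, θfun σ r ∂F ≤ ∫ r, θfun σ r ∂G := by
  have hF : ∀ᵐ r ∂F, 0 ≤ r := by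
    filter_upwards [mem_ae_iff.2 hFc] with r (hr : 0 < r) using hr.le
  have hG : ∀ᵐ r ∂G, 0 ≤ r := by
    filter_upwards [mem_ae_iff.2 hGc] with r (hr : 0 < r) using hr.le
  refine integral_le_integral_of_lintegral_ofReal_le (ae_of_all _ (θfun_nonneg σ))
    (measurable_θfun σ).aestronglyMeasurable (ae_of_all _ (θfun_nonneg σ)) hIntG ?_
  rw [lintegral_ofReal_θfun_eq hσ.ne' F hF, lintegral_ofReal_θfun_eq hσ.ne' G hG]
  gcongr 1 + ?_
  exact lintegral_ofReal_sqrt_add_mul_sub_sqrt_le F G hF hG (by norm_num) (by positivity) hdom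

theorem stmt12 (σ : ℝ) (hσ : 0 < σ) (F G : Measure ℝ)
    [IsProbabilityMeasure F] [IsProbabilityMeasure G]
    (hFc : F (Ioi (0:ℝ))ᶜ = 0) (hGc : G (Ioi (0:ℝ))ᶜ = 0)
    (hdom : ∀ t : ℝ, 0 ≤ t → discount F t ≥ discount G t)
    (hIntF : Integrable (θfun σ) F)
    (hIntG : Integrable (θfun σ) G) :
    ∫ r, θfun σ r ∂F ≤ ∫ r, θfun σ r ∂G :=
  stmt12_general σ hσ F G hFc hGc hdom hIntG
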